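/- arXiv:1407.1715 — 2 statements merged into one kernel-verified Lean document; each statement's English description precedes it below -/
import Mathlib

section
/- For all real X, Y and γ, one has ∫∫_Γ z₁ z₂ n(z₁) n(z₂) dz₁ dz₂ = n(γX + Y)·n(X)/(1+γ²) − (γ Y/(1+γ²)^{3/2})·n( Y/√(1+γ²) )·Φ( −((1+γ²)X + γY)/√(1+γ²) ), where Γ = {(z₁, z₂) ∈ ℝ² : z₁ > Y + γ z₂ and z₂ > X}. -/
open Real MeasureTheory

/-- The standard normal density `n(x) = e^{−x²/2}/√(2π)`. -/
noncomputable def stdPDF (x : ℝ) : ℝ := Real.exp (-(x ^ 2) / 2) / Real.sqrt (2 * Real.pi)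

/-- The standard normal cumulative distribution function. -/
noncomputable def stdCDF (z : ℝ) : ℝ := ∫ y in Set.Iic z, stdPDF y

open Set Filter Topology

lemma stdPDF_hasDerivAt (x : ℝ) : HasDerivAt stdPDF (-x * stdPDF x) x := by
  have h1 : HasDerivAt (fun x : ℝ => -(x ^ 2) / 2) (-x) x := by
    have := ((hasDerivAt_pow 2 x).neg.div_const 2)
    exact this.congr_deriv (by norm_num; ring)
  have := (h1.exp).div_const (Real.sqrt (2 * Real.pi))
  exact this.congr_deriv (by simp [stdPDF]; ring)

lemma continuous_stdPDF : Continuous stdPDF := by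
  unfold stdPDF; fun_prop

lemma integrable_stdPDF : Integrable stdPDF := by
  have := (integrable_exp_neg_mul_sq (by norm_num : (0:ℝ) < 1/2)).div_const (Real.sqrt (2 * Real.pi))
  refine this.congr (Filter.Eventually.of_forall fun x => ?_)
  simp [stdPDF]; ring_nf

lemma integrable_mul_stdPDF : Integrable (fun z : ℝ => z * stdPDF z) := by
  have := (integrable_mul_exp_neg_mul_sq (by norm_num : (0:ℝ) < 1/2)).div_const (Real.sqrt (2 * Real.pi))
  refine this.congr (Filter.Eventually.of_forall fun x => ?_)
  simp [stdPDF]; ring_nf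

lemma stdPDF_tendsto : Tendsto stdPDF atTop (𝓝 0) := by
  have h : Tendsto (fun x : ℝ => -(x ^ 2) / 2) atTop atBot := by
    have := (tendsto_pow_atTop (two_ne_zero)).atTop_mul_const_of_neg
      (by norm_num : (-(1:ℝ)/2) < 0)
    convert this using 2 with x
    ring
  have := (Real.tendsto_exp_atBot.comp h).div_const (Real.sqrt (2 * Real.pi))
  unfold stdPDF
  convert this using 2
  simp [Function.comp]
  simp

lemma integral_stdPDF : ∫ x, stdPDF x = 1 := by
  have h : ∫ x : ℝ, Real.exp (-(1/2) * x ^ 2) = Real.sqrt (π / (1/2)) := integral_gaussian (1/2)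
  have h2 : ∫ x, stdPDF x = (∫ x : ℝ, Real.exp (-(1/2) * x ^ 2)) / Real.sqrt (2 * Real.pi) := by
    rw [← integral_div]
    congr 1; funext x; simp [stdPDF]; ring_nf
  rw [h2, h]
  rw [div_eq_one_iff_eq (by positivity)]
  congr 1; ring

lemma stdCDF_tendsto : Tendsto stdCDF atTop (𝓝 1) := by
  have heq : stdCDF = fun z => ∫ x, Set.indicator (Iic z) stdPDF x := by
    funext z
    rw [integral_indicator measurableSet_Iic]
    rfl
  rw [heq, ← integral_stdPDF]
  apply tendsto_integral_filter_of_dominated_convergence stdPDF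
  · exact Filter.Eventually.of_forall fun z =>
      (integrable_stdPDF.aestronglyMeasurable).indicator measurableSet_Iic
  · refine Filter.Eventually.of_forall fun z => Filter.Eventually.of_forall fun x => ?_
    rw [Real.norm_eq_abs]
    have hnn : 0 ≤ stdPDF x := by unfold stdPDF; positivity
    rcases le_or_gt x z with h | h
    · rw [Set.indicator_of_mem (by exact h), abs_of_nonneg hnn]
    · rw [Set.indicator_of_notMem (by exact not_le.mpr h)]
      simpa using hnn
  · exact integrable_stdPDF
  · refine Filter.Eventually.of_forall fun x => ?_
    have h : ∀ᶠ z in atTop, (fun _ : ℝ => stdPDF x) z = Set.indicator (Iic z) stdPDF x := by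
      filter_upwards [eventually_ge_atTop x] with z hz
      exact (Set.indicator_of_mem (Set.mem_Iic.mpr hz) stdPDF).symm
    exact Filter.Tendsto.congr' h tendsto_const_nhds

lemma stdCDF_hasDerivAt (u : ℝ) : HasDerivAt stdCDF (stdPDF u) u := by
  have heq : stdCDF = fun x => stdCDF 0 + ∫ t in (0:ℝ)..x, stdPDF t := by
    funext x
    have := intervalIntegral.integral_Iic_sub_Iic (integrable_stdPDF.integrableOn (s := Iic (0:ℝ)))
      (integrable_stdPDF.integrableOn (s := Iic x))
    unfold stdCDF
    rw [← this]; ring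
  rw [heq]
  have : HasDerivAt (fun x => ∫ t in (0:ℝ)..x, stdPDF t) (stdPDF u) u :=
    intervalIntegral.integral_hasDerivAt_right
      integrable_stdPDF.intervalIntegrable
      integrable_stdPDF.aestronglyMeasurable.stronglyMeasurableAtFilter
      continuous_stdPDF.continuousAt
  simpa using this.const_add (stdCDF 0)

lemma integral_Ioi_mul_stdPDF (a : ℝ) : ∫ z in Ioi a, z * stdPDF z = stdPDF a := by
  have hderiv : ∀ x ∈ Ioi a, HasDerivAt (fun w => -stdPDF w) (x * stdPDF x) x := by
    intro x _
    have := (stdPDF_hasDerivAt x).neg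
    exact this.congr_deriv (by ring)
  have htend : Tendsto (fun w => -stdPDF w) atTop (𝓝 0) := by
    simpa using stdPDF_tendsto.neg
  have := integral_Ioi_of_hasDerivAt_of_tendsto
    (continuous_stdPDF.neg.continuousWithinAt) hderiv
    (integrable_mul_stdPDF.integrableOn) htend
  simpa using this

lemma stdCDF_neg (t : ℝ) : stdCDF (-t) = 1 - stdCDF t := by
  have h1 : stdCDF (-t) = ∫ x in Ioi t, stdPDF x := by
    unfold stdCDF
    rw [← integral_comp_neg_Ioi]
    congr 1; funext x
    unfold stdPDF; rw [neg_pow]; norm_num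
  have h2 : stdCDF t + ∫ x in Ioi t, stdPDF x = 1 := by
    unfold stdCDF
    rw [intervalIntegral.integral_Iic_add_Ioi integrable_stdPDF.integrableOn integrable_stdPDF.integrableOn,
      integral_stdPDF]
  rw [h1]; linarith

lemma lemB (s c X : ℝ) (hs : 0 < s) :
    ∫ z in Ioi X, z * stdPDF (s * z + c)
      = -(c/s^2) + (1/s^2) * stdPDF (s*X+c) + (c/s^2) * stdCDF (s*X+c) := by
  set G : ℝ → ℝ := fun z => -((1/s^2) * stdPDF (s*z+c)) - (c/s^2) * stdCDF (s*z+c) with hG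
  have haff : ∀ z : ℝ, HasDerivAt (fun z : ℝ => s * z + c) s z := by
    intro z
    simpa using ((hasDerivAt_id z).const_mul s).add_const c
  have hderiv : ∀ z : ℝ, HasDerivAt G (z * stdPDF (s*z+c)) z := by
    intro z
    have h1 : HasDerivAt (fun z : ℝ => stdPDF (s*z+c)) ((-(s*z+c) * stdPDF (s*z+c)) * s) z :=
      (stdPDF_hasDerivAt (s*z+c)).comp (h₂ := stdPDF) z (haff z)
    have h2 : HasDerivAt (fun z : ℝ => stdCDF (s*z+c)) (stdPDF (s*z+c) * s) z :=
      (stdCDF_hasDerivAt (s*z+c)).comp (h₂ := stdCDF) z (haff z)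
    have := ((h1.const_mul ((1:ℝ)/s^2)).neg).sub (h2.const_mul (c/s^2))
    exact this.congr_deriv (by field_simp; ring)
  have hPint : Integrable (fun z : ℝ => stdPDF (s*z+c)) := by
    have h1 : Integrable (fun z : ℝ => stdPDF (z + c)) := integrable_stdPDF.comp_add_right c
    exact h1.comp_mul_left' hs.ne'
  have hZint : Integrable (fun z : ℝ => z * stdPDF (s*z+c)) := by
    have h1 : Integrable (fun z : ℝ => (z + c) * stdPDF (z + c)) :=
      integrable_mul_stdPDF.comp_add_right c
    have h2 : Integrable (fun z : ℝ => (s*z + c) * stdPDF (s*z+c)) := h1.comp_mul_left' hs.ne'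
    have h3 := ((h2.const_mul ((1:ℝ)/s)).sub (hPint.const_mul (c/s)))
    refine h3.congr (Filter.Eventually.of_forall fun z => ?_)
    simp only [Pi.sub_apply]
    field_simp
    ring
  have haff_top : Tendsto (fun z : ℝ => s * z + c) atTop atTop :=
    tendsto_atTop_add_const_right _ c (Filter.Tendsto.const_mul_atTop hs tendsto_id)
  have htend : Tendsto G atTop (𝓝 (-(c/s^2))) := by
    have hP := stdPDF_tendsto.comp haff_top
    have hC := stdCDF_tendsto.comp haff_top
    have h := ((hP.const_mul ((1:ℝ)/s^2)).neg).sub (hC.const_mul (c/s^2))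
    rw [hG]
    convert h using 2 with z
    norm_num
    ring
  have hcont : ContinuousWithinAt G (Ici X) X :=
    (hderiv X).continuousAt.continuousWithinAt
  have := integral_Ioi_of_hasDerivAt_of_tendsto hcont (fun z _ => hderiv z)
    hZint.integrableOn htend
  rw [this, hG]
  ring

lemma stdPDF_mul_eq (γ Y z : ℝ) :
    stdPDF (Y + γ * z) * stdPDF z
      = stdPDF (Y / Real.sqrt (1 + γ ^ 2))
        * stdPDF (Real.sqrt (1 + γ ^ 2) * z + γ * Y / Real.sqrt (1 + γ ^ 2)) := by
  set s := Real.sqrt (1 + γ ^ 2) with hs_def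
  have hs2 : s ^ 2 = 1 + γ ^ 2 := Real.sq_sqrt (by positivity)
  have hs : s ≠ 0 := by
    intro h; rw [h] at hs2; simp at hs2; nlinarith [sq_nonneg γ]
  unfold stdPDF
  rw [div_mul_div_comm, div_mul_div_comm, ← Real.exp_add, ← Real.exp_add]
  congr 2
  field_simp
  linear_combination (z^2*s^2 - Y^2) * hs2

/-- `∫∫_Γ z₁ z₂ n(z₁) n(z₂) dz₁ dz₂` over `Γ = {z₁ > Y + γ z₂, z₂ > X}`. -/
theorem J1_eq (X Y γ : ℝ) :
    (∫ z₂ in Set.Ioi X, ∫ z₁ in Set.Ioi (Y + γ * z₂), z₁ * z₂ * stdPDF z₁ * stdPDF z₂)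
      = stdPDF (γ * X + Y) * stdPDF X / (1 + γ ^ 2)
        - γ * Y / (1 + γ ^ 2) ^ ((3:ℝ)/2) * stdPDF (Y / Real.sqrt (1 + γ ^ 2))
            * stdCDF (-((1 + γ ^ 2) * X + γ * Y) / Real.sqrt (1 + γ ^ 2)) := by
  set s := Real.sqrt (1 + γ ^ 2) with hs_def
  have hs2 : s ^ 2 = 1 + γ ^ 2 := Real.sq_sqrt (by positivity)
  have hs_pos : 0 < s := Real.sqrt_pos.mpr (by positivity)
  have hs : s ≠ 0 := hs_pos.ne'
  set c := γ * Y / s with hc_def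
  have hinner : ∀ z₂ : ℝ,
      (∫ z₁ in Ioi (Y + γ * z₂), z₁ * z₂ * stdPDF z₁ * stdPDF z₂)
        = stdPDF (Y / s) * (z₂ * stdPDF (s * z₂ + c)) := by
    intro z₂
    have h1 : ∀ z₁ : ℝ, z₁ * z₂ * stdPDF z₁ * stdPDF z₂
        = (z₂ * stdPDF z₂) * (z₁ * stdPDF z₁) := fun _ => by ring
    simp only [h1]
    rw [MeasureTheory.integral_const_mul, integral_Ioi_mul_stdPDF]
    have hp := stdPDF_mul_eq γ Y z₂
    rw [← hs_def, ← hc_def] at hp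
    linear_combination z₂ * hp
  rw [setIntegral_congr_fun measurableSet_Ioi (fun z₂ _ => hinner z₂),
    MeasureTheory.integral_const_mul, lemB s c X hs_pos]
  -- final algebra
  have hprodX := stdPDF_mul_eq γ Y X
  rw [← hs_def, ← hc_def] at hprodX
  have hadd : Y + γ * X = γ * X + Y := by ring
  rw [hadd] at hprodX
  have harg : -((1 + γ ^ 2) * X + γ * Y) / s = -(s * X + c) := by
    rw [hc_def]
    field_simp
    linear_combination X * hs2
  have hrpow : (1 + γ ^ 2) ^ ((3:ℝ)/2) = s ^ 3 := by
    rw [show ((3:ℝ)/2) = ((1:ℝ)/2) * 3 by norm_num,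
      Real.rpow_mul (by positivity), ← Real.sqrt_eq_rpow, ← hs_def,
      show (3:ℝ) = ((3:ℕ):ℝ) by norm_num, Real.rpow_natCast]
  rw [harg, stdCDF_neg, hrpow, ← hs2]
  linear_combination (-(1/s^2)) * hprodX
    + (stdPDF (Y/s) * (stdCDF (s*X+c) - 1) / s^2) * hc_def
end

section
/- For all real X, Y and γ, one has ∫∫_Γ z₁ n(z₁) n(z₂) dz₁ dz₂ = (1/√(1+γ²))·n( Y/√(1+γ²) )·Φ( −((1+γ²)X + γY)/√(1+γ²) ), where Γ = {(z₁, z₂) ∈ ℝ² : z₁ > Y + γ z₂ and z₂ > X}. -/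
open Real MeasureTheory

open Set

lemma integral_comp_add_right_Ioi (f : ℝ → ℝ) (a c : ℝ) :
    (∫ x in Ioi a, f (x + c)) = ∫ x in Ioi (a + c), f x := by
  have A : MeasurableEmbedding fun x : ℝ => x + c :=
    (Homeomorph.addRight c).isClosedEmbedding.measurableEmbedding
  have h := A.setIntegral_map (μ := volume) f (Ioi (a + c))
  rw [map_add_right_eq_self (volume : Measure ℝ) c] at h
  have hpre : (fun x : ℝ => x + c) ⁻¹' Ioi (a + c) = Ioi a := by
    ext x; simp
  rw [h, hpre]

lemma stdPDF_even (x : ℝ) : stdPDF (-x) = stdPDF x := by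
  simp [stdPDF]

lemma hasDerivAt_neg_stdPDF (x : ℝ) :
    HasDerivAt (fun z => -stdPDF z) (x * stdPDF x) x := by
  have h1 : HasDerivAt (fun z : ℝ => -(z ^ 2) / 2) (-x) x := by
    have := ((hasDerivAt_pow 2 x).neg).div_const 2
    refine this.congr_deriv ?_
    norm_num; ring
  have h2 := ((h1.exp).div_const (Real.sqrt (2 * Real.pi))).neg
  have h3 : HasDerivAt (fun z => -stdPDF z)
      (-(Real.exp (-(x ^ 2) / 2) * -x / Real.sqrt (2 * Real.pi))) x := h2
  convert h3 using 1
  simp [stdPDF]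
  ring

lemma stdPDF_tendsto_s10 : Filter.Tendsto stdPDF Filter.atTop (nhds 0) := by
  have h1 : Filter.Tendsto (fun z : ℝ => -(z ^ 2) / 2) Filter.atTop Filter.atBot := by
    apply Filter.Tendsto.atBot_div_const (by norm_num)
    exact Filter.tendsto_neg_atBot_iff.mpr (Filter.tendsto_pow_atTop (by norm_num))
  have h2 := (Real.tendsto_exp_atBot.comp h1).div_const (Real.sqrt (2 * Real.pi))
  have h0 : (0 : ℝ) = 0 / Real.sqrt (2 * Real.pi) := by simp
  rw [show stdPDF = fun z => Real.exp (-(z ^ 2) / 2) / Real.sqrt (2 * Real.pi) from rfl, h0]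
  exact h2

lemma inner_integral (a : ℝ) : (∫ z in Ioi a, z * stdPDF z) = stdPDF a := by
  have hint : IntegrableOn (fun z => z * stdPDF z) (Ioi a) volume := by
    have h := integrable_mul_exp_neg_mul_sq (b := (1 : ℝ) / 2) (by norm_num)
    have heq : (fun z : ℝ => z * stdPDF z)
        = fun z => z * Real.exp (-(1 / 2) * z ^ 2) / Real.sqrt (2 * Real.pi) := by
      funext z
      rw [stdPDF, show -(z ^ 2) / 2 = -(1 / 2 : ℝ) * z ^ 2 by ring]
      ring
    rw [heq]
    exact (h.div_const _).integrableOn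
  have htend : Filter.Tendsto (fun z => -stdPDF z) Filter.atTop (nhds 0) := by
    rw [show (0 : ℝ) = -0 by norm_num]
    exact stdPDF_tendsto_s10.neg
  have := MeasureTheory.integral_Ioi_of_hasDerivAt_of_tendsto'
    (fun x _ => hasDerivAt_neg_stdPDF x) hint htend
  rw [this]; ring

lemma stdPDF_mul (a b : ℝ) :
    stdPDF a * stdPDF b = Real.exp (-(a ^ 2 + b ^ 2) / 2) / (2 * Real.pi) := by
  have h : Real.sqrt (2 * Real.pi) * Real.sqrt (2 * Real.pi) = 2 * Real.pi :=
    Real.mul_self_sqrt (by positivity)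
  rw [stdPDF, stdPDF, div_mul_div_comm, h, ← Real.exp_add]
  ring_nf

lemma tail_eq_cdf (b : ℝ) : (∫ u in Ioi b, stdPDF u) = stdCDF (-b) := by
  rw [stdCDF, ← integral_comp_neg_Ioi]
  exact setIntegral_congr_fun measurableSet_Ioi (fun x _ => (stdPDF_even x).symm)

/-- `∫∫_Γ z₁ n(z₁) n(z₂) dz₁ dz₂` over `Γ = {z₁ > Y + γ z₂, z₂ > X}`. -/
theorem J2_eq (X Y γ : ℝ) :
    (∫ z₂ in Set.Ioi X, ∫ z₁ in Set.Ioi (Y + γ * z₂), z₁ * stdPDF z₁ * stdPDF z₂)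
      = 1 / Real.sqrt (1 + γ ^ 2) * stdPDF (Y / Real.sqrt (1 + γ ^ 2))
          * stdCDF (-((1 + γ ^ 2) * X + γ * Y) / Real.sqrt (1 + γ ^ 2)) := by
  set s := Real.sqrt (1 + γ ^ 2) with hs
  have hs0 : 0 < s := Real.sqrt_pos.mpr (by positivity)
  have hs2 : s ^ 2 = 1 + γ ^ 2 := Real.sq_sqrt (by positivity)
  have step1 : ∀ z₂ : ℝ, (∫ z₁ in Ioi (Y + γ * z₂), z₁ * stdPDF z₁ * stdPDF z₂)
      = stdPDF (Y + γ * z₂) * stdPDF z₂ := by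
    intro z₂
    rw [show (fun z₁ => z₁ * stdPDF z₁ * stdPDF z₂) = fun z₁ => (z₁ * stdPDF z₁) * stdPDF z₂
      from rfl, integral_mul_const, inner_integral]
  rw [setIntegral_congr_fun measurableSet_Ioi (fun z₂ _ => step1 z₂)]
  have step2 : ∀ z : ℝ, stdPDF (Y + γ * z) * stdPDF z
      = stdPDF (Y / s) * stdPDF (s * z + γ * Y / s) := by
    intro z
    rw [stdPDF_mul, stdPDF_mul]
    congr 2
    have : (Y / s) ^ 2 + (s * z + γ * Y / s) ^ 2
        = Y ^ 2 / s ^ 2 + s ^ 2 * z ^ 2 + 2 * (γ * Y * z) + γ ^ 2 * Y ^ 2 / s ^ 2 := by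
      field_simp; ring
    rw [this, hs2]
    field_simp
    ring
  rw [setIntegral_congr_fun measurableSet_Ioi (fun z _ => step2 z), integral_const_mul]
  have h4 : (∫ z in Ioi X, stdPDF (s * z + γ * Y / s))
      = s⁻¹ • ∫ x in Ioi (s * X), stdPDF (x + γ * Y / s) :=
    integral_comp_mul_left_Ioi (fun u => stdPDF (u + γ * Y / s)) X hs0
  rw [integral_comp_add_right_Ioi] at h4
  rw [h4, smul_eq_mul, tail_eq_cdf]
  have harg : -(s * X + γ * Y / s) = -((1 + γ ^ 2) * X + γ * Y) / s := by
    rw [eq_div_iff hs0.ne']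
    have hc : γ * Y / s * s = γ * Y := div_mul_cancel₀ _ hs0.ne'
    linear_combination (-X) * hs2 - hc
  rw [harg, one_div]
  ring
end
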